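/- There exists a unique minimal Markov basis (up to replacing moves z by −z) if and only if the set of all indispensable moves forms a Markov basis; and in this case every minimal Markov basis consists, up to sign, exactly of the indispensable moves. -/

import Mathlib

open scoped BigOperators

section Defs

variable {ι κ : Type*} [Fintype ι]

/-- Embed a frequency vector `x ∈ ℕ^ι` into `ℤ^ι`. -/
def natToInt (x : ι → ℕ) : ι → ℤ := fun i => (x i : ℤ)

/-- The fiber of `t`: all frequency vectors `x` with `A x = t`. -/
def fiberOf (A : Matrix κ ι ℤ) (t : κ → ℤ) : Set (ι → ℕ) :=
  {x | A.mulVec (natToInt x) = t}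

/-- A move for `A`: an integer vector in the kernel of `A`. -/
def IsMove (A : Matrix κ ι ℤ) (z : ι → ℤ) : Prop := A.mulVec z = 0

/-- The positive part `z⁺` of an integer vector, as a frequency vector. -/
def posOf (z : ι → ℤ) : ι → ℕ := fun i => (z i).toNat

/-- The negative part `z⁻` of an integer vector, as a frequency vector. -/
def negOf (z : ι → ℤ) : ι → ℕ := fun i => (-z i).toNat

/-- The degree of a move: `deg z = |z⁺|`. -/
def degOf (z : ι → ℤ) : ℕ := ∑ i, posOf z i

/-- One step: add or subtract one move of `B`, staying in `ℕ^ι`. -/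
def MStep (B : Set (ι → ℤ)) (x y : ι → ℕ) : Prop :=
  ∃ z ∈ B, natToInt y = natToInt x + z ∨ natToInt y = natToInt x - z

/-- `y` is accessible from `x` by the moves of `B` (staying nonnegative throughout,
since all intermediate points are frequency vectors). -/
def Accessible (B : Set (ι → ℤ)) : (ι → ℕ) → (ι → ℕ) → Prop :=
  Relation.ReflTransGen (MStep B)

/-- A Markov basis: a finite set of moves such that every fiber forms a single
equivalence class for mutual accessibility. -/
def IsMarkovBasis (A : Matrix κ ι ℤ) (B : Set (ι → ℤ)) : Prop :=
  B.Finite ∧ (∀ z ∈ B, IsMove A z) ∧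
    ∀ t : κ → ℤ, ∀ x ∈ fiberOf A t, ∀ y ∈ fiberOf A t, Accessible B x y

/-- A minimal Markov basis: no proper subset is a Markov basis. -/
def IsMinimalMarkovBasis (A : Matrix κ ι ℤ) (B : Set (ι → ℤ)) : Prop :=
  IsMarkovBasis A B ∧ ∀ B' ⊂ B, ¬ IsMarkovBasis A B'

/-- An indispensable monomial: every Markov basis contains a move whose
positive or negative part is `x`. -/
def IsIndispensableMonomial (A : Matrix κ ι ℤ) (x : ι → ℕ) : Prop :=
  ∀ B : Set (ι → ℤ), IsMarkovBasis A B → ∃ z ∈ B, posOf z = x ∨ negOf z = x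

/-- `B_n`: the set of moves of degree at most `n`. -/
def Bmoves (A : Matrix κ ι ℤ) (n : ℕ) : Set (ι → ℤ) :=
  {z | IsMove A z ∧ degOf z ≤ n}

/-- The sample size `|t|` of a sufficient statistic `t` (well defined on nonempty
fibers under homogeneity). -/
noncomputable def sampleSize (A : Matrix κ ι ℤ) (t : κ → ℤ) : ℕ :=
  sInf {n | ∃ x ∈ fiberOf A t, ∑ i, x i = n}

/-- The `B_{|t|-1}`-equivalence classes of the fiber of `t`. -/
noncomputable def fiberClasses (A : Matrix κ ι ℤ) (t : κ → ℤ) : Set (Set (ι → ℕ)) :=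
  {C | ∃ x ∈ fiberOf A t,
    C = {y | y ∈ fiberOf A t ∧ Accessible (Bmoves A (sampleSize A t - 1)) x y}}

/-- Homogeneity: some rational vector `w` has `w ⬝ aᵢ = 1` for every column `aᵢ`. -/
def IsHomogeneousMatrix [Fintype κ] (A : Matrix κ ι ℤ) : Prop :=
  ∃ w : κ → ℚ, ∀ i : ι, ∑ j, w j * (A j i : ℚ) = 1

end Defs

/-- An indispensable move: a nonzero move whose fiber consists exactly of its positive
and negative parts. -/
def IsIndispensableMove {p d : ℕ} (A : Matrix (Fin d) (Fin p) ℤ) (z : Fin p → ℤ) : Prop :=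
  IsMove A z ∧ z ≠ 0 ∧
    fiberOf A (A.mulVec (natToInt (posOf z))) = {posOf z, negOf z}

/-- Two sets of moves coincide up to replacing moves `z` by `-z`. -/
def EqUpToSign {ι : Type*} (B₁ B₂ : Set (ι → ℤ)) : Prop :=
  (∀ z ∈ B₁, z ∈ B₂ ∨ -z ∈ B₂) ∧ (∀ z ∈ B₂, z ∈ B₁ ∨ -z ∈ B₁)

/-! Each indispensable move lies, up to sign, in every Markov basis. So if the indispensable moves
form a Markov basis, a minimal Markov basis contains nothing else, and any two minimal bases agree
up to sign. Conversely, if a minimal basis `B` contains a dispensable move `b`, the fiber of `b⁺`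
has a third point `x₀`; replacing `b` by the detour moves `x₀ - b⁺` and `x₀ - b⁻` still gives a
Markov basis, and homogeneity (no nonzero move is sign-definite) makes every minimal basis inside
it avoid `±b`, so it differs from `B`. -/

theorem Relation.ReflTransGen.exists_exit_step {α : Type*} {r : α → α → Prop} {P : α → Prop}
    {x y : α} (h : Relation.ReflTransGen r x y) (hx : P x) (hy : ¬P y) :
    ∃ a b, Relation.ReflTransGen r x a ∧ P a ∧ ¬P b ∧ r a b := by
  induction h with
  | refl => exact absurd hx hy
  | @tail b c hxb hbc ih =>
    by_cases hb : P b
    · exact ⟨b, c, hxb, hb, hy, hbc⟩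
    · exact ih hb

section General

variable {ι κ : Type*} {A : Matrix κ ι ℤ} {B B' : Set (ι → ℤ)} {z : ι → ℤ}

theorem natToInt_injective : Function.Injective (natToInt (ι := ι)) := fun x y h =>
  funext fun i => by simpa [natToInt] using congrFun h i

theorem natToInt_posOf_sub_negOf (z : ι → ℤ) : natToInt (posOf z) - natToInt (negOf z) = z := by
  funext i
  simp only [natToInt, posOf, negOf, Pi.sub_apply]
  omega

theorem posOf_neg (z : ι → ℤ) : posOf (-z) = negOf z := rfl

theorem negOf_neg (z : ι → ℤ) : negOf (-z) = posOf z := by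
  funext i
  simp [posOf, negOf]

theorem MStep.of_forall_mem_or_neg_mem (h : ∀ z ∈ B, z ∈ B' ∨ -z ∈ B') {x y : ι → ℕ}
    (hxy : MStep B x y) : MStep B' x y := by
  obtain ⟨z, hz, hxy⟩ := hxy
  rcases h z hz with hz' | hz'
  · exact ⟨z, hz', hxy⟩
  · exact ⟨-z, hz', by rw [sub_neg_eq_add, ← sub_eq_add_neg]; exact hxy.symm⟩

def detourMoves (x₀ : ι → ℕ) (b : ι → ℤ) : Set (ι → ℤ) :=
  {natToInt x₀ - natToInt (posOf b), natToInt x₀ - natToInt (negOf b)}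

/-- The step `x ↦ x + b` is the detour `x ↦ x + (x₀ - b⁻) ↦ x + (x₀ - b⁻) - (x₀ - b⁺)`, which
stays nonnegative because `x ≥ b⁻`. -/
theorem accessible_detour_of_add (x₀ : ι → ℕ) {b : ι → ℤ} {x y : ι → ℕ}
    (hxy : natToInt y = natToInt x + b) :
    Accessible (detourMoves x₀ b) x y := by
  have hcoord := fun i => congrFun hxy i
  simp only [natToInt, Pi.add_apply] at hcoord
  refine .head (b := fun i => x i - negOf b i + x₀ i) ⟨_, .inr rfl, .inl ?_⟩
    (.single ⟨_, .inl rfl, .inr ?_⟩) <;>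
  · funext i
    have := hcoord i
    simp only [natToInt, posOf, negOf, Pi.add_apply, Pi.sub_apply]
    omega

theorem accessible_detour (x₀ : ι → ℕ) {b : ι → ℤ} {x y : ι → ℕ} (hxy : MStep {b} x y) :
    Accessible (detourMoves x₀ b) x y := by
  obtain ⟨_, rfl, hxy | hxy⟩ := hxy
  · exact accessible_detour_of_add x₀ hxy
  · have := accessible_detour_of_add x₀ (hxy.trans (sub_eq_add_neg _ _))
    rwa [detourMoves, posOf_neg, negOf_neg, Set.pair_comm] at this

variable [Fintype ι]

theorem IsMove.neg (hz : IsMove A z) : IsMove A (-z) := by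
  rw [IsMove, Matrix.mulVec_neg, hz, neg_zero]

theorem IsMove.mulVec_negOf (hz : IsMove A z) :
    A.mulVec (natToInt (negOf z)) = A.mulVec (natToInt (posOf z)) := by
  rw [← sub_eq_zero, ← Matrix.mulVec_sub, ← neg_sub, natToInt_posOf_sub_negOf,
    Matrix.mulVec_neg, hz, neg_zero]

theorem IsMove.sum_eq_zero [Fintype κ] (hA : IsHomogeneousMatrix A) (hz : IsMove A z) :
    ∑ i, z i = 0 := by
  obtain ⟨w, hw⟩ := hA
  have hrow : ∀ j, ∑ i, (A j i : ℚ) * z i = 0 := fun j => by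
    exact_mod_cast congrFun hz j
  have hsum : (∑ i, (z i : ℚ)) = ∑ j, w j * ∑ i, (A j i : ℚ) * z i := by
    simp only [Finset.mul_sum, ← mul_assoc]
    rw [Finset.sum_comm]
    simp [← Finset.sum_mul, hw]
  have : (∑ i, (z i : ℚ)) = 0 := by simp [hsum, hrow]
  exact_mod_cast this

theorem IsMove.eq_zero_of_nonneg [Fintype κ] (hA : IsHomogeneousMatrix A) (hz : IsMove A z)
    (hnonneg : 0 ≤ z) : z = 0 :=
  funext fun i => (Finset.sum_eq_zero_iff_of_nonneg fun i _ => hnonneg i).mp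
    (hz.sum_eq_zero hA) i (Finset.mem_univ i)

theorem Accessible.mem_fiberOf (hmove : ∀ z ∈ B, IsMove A z) {t : κ → ℤ} {x y : ι → ℕ}
    (hx : x ∈ fiberOf A t) (hxy : Accessible B x y) : y ∈ fiberOf A t := by
  induction hxy with
  | refl => exact hx
  | tail _ hstep ih =>
    obtain ⟨z, hz, hyz | hyz⟩ := hstep <;>
    · have hAz : A.mulVec z = 0 := hmove z hz
      have ih : A.mulVec (natToInt _) = t := ih
      change A.mulVec _ = t
      simp only [hyz, Matrix.mulVec_add, Matrix.mulVec_sub, hAz, add_zero, sub_zero, ih]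

theorem IsMarkovBasis.of_mstep (hB : IsMarkovBasis A B) (hfin : B'.Finite)
    (hmove : ∀ z ∈ B', IsMove A z) (hstep : ∀ x y, MStep B x y → Accessible B' x y) :
    IsMarkovBasis A B' :=
  ⟨hfin, hmove, fun t x hx y hy => Relation.ReflTransGen.lift' id hstep x y (hB.2.2 t x hx y hy)⟩

theorem IsMarkovBasis.of_forall_mem_or_neg_mem (hB : IsMarkovBasis A B) (hfin : B'.Finite)
    (hmove : ∀ z ∈ B', IsMove A z) (h : ∀ z ∈ B, z ∈ B' ∨ -z ∈ B') : IsMarkovBasis A B' :=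
  hB.of_mstep hfin hmove fun _ _ hxy => .single (hxy.of_forall_mem_or_neg_mem h)

theorem IsMarkovBasis.exists_minimal_subset (hB : IsMarkovBasis A B) :
    ∃ B' ⊆ B, IsMinimalMarkovBasis A B' := by
  have hfin : {C | C ⊆ B ∧ IsMarkovBasis A C}.Finite :=
    hB.1.finite_subsets.subset fun C hC => hC.1
  obtain ⟨B', hB'B, hmin⟩ := hfin.exists_le_minimal ⟨subset_rfl, hB⟩
  exact ⟨B', hB'B, hmin.1.2, fun C hC hMC =>
    hC.2 (hmin.2 ⟨hC.1.trans hB'B, hMC⟩ hC.1)⟩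

theorem IsMarkovBasis.swap (hB : IsMarkovBasis A B) {b : ι → ℤ} (hb : IsMove A b)
    {x₀ : ι → ℕ} (hx₀ : x₀ ∈ fiberOf A (A.mulVec (natToInt (posOf b)))) :
    IsMarkovBasis A (B \ {b} ∪ detourMoves x₀ b) := by
  refine hB.of_mstep (hB.1.sdiff.union ((Set.finite_singleton _).insert _)) ?_
    fun x y ⟨z, hz, hxy⟩ => ?_
  · rintro z (hz | rfl | rfl)
    · exact hB.2.1 z hz.1
    · rw [IsMove, Matrix.mulVec_sub, hx₀, sub_self]
    · rw [IsMove, Matrix.mulVec_sub, hx₀, hb.mulVec_negOf, sub_self]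
  by_cases hzb : z = b
  · subst hzb
    exact Relation.ReflTransGen.mono (fun _ _ => MStep.of_forall_mem_or_neg_mem
      fun z hz => .inl (Or.inr hz)) x y (accessible_detour x₀ ⟨z, rfl, hxy⟩)
  · exact .single ⟨z, .inl ⟨hz, hzb⟩, hxy⟩

/-- Homogeneity forbids a detour move from being `±b`: that would make `b` or `-b` a nonzero
nonnegative move, or put `x₀` at `b⁺` or `b⁻`. -/
theorem notMem_detourMoves [Fintype κ] (hA : IsHomogeneousMatrix A) {b : ι → ℤ} (hb : IsMove A b)
    (hb0 : b ≠ 0) {x₀ : ι → ℕ} (hx₀ : x₀ ∉ ({posOf b, negOf b} : Set (ι → ℕ))) :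
    b ∉ detourMoves x₀ b ∧ -b ∉ detourMoves x₀ b := by
  simp only [detourMoves, Set.mem_insert_iff, Set.mem_singleton_iff, not_or] at hx₀ ⊢
  refine ⟨⟨fun h => hb0 (hb.eq_zero_of_nonneg hA fun i => ?_),
      fun h => hx₀.1 (funext fun i => ?_)⟩,
    ⟨fun h => hx₀.2 (funext fun i => ?_),
      fun h => hb0 (neg_eq_zero.mp (hb.neg.eq_zero_of_nonneg hA fun i => ?_))⟩⟩ <;>
  · have := congrFun h i
    simp only [natToInt, posOf, negOf, Pi.sub_apply, Pi.neg_apply, Pi.zero_apply] at this ⊢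
    omega

theorem IsMinimalMarkovBasis.zero_notMem (hB : IsMinimalMarkovBasis A B) : (0 : ι → ℤ) ∉ B := by
  intro h0
  refine hB.2 _ (Set.sdiff_singleton_ssubset.mpr h0) <| hB.1.of_mstep hB.1.1.sdiff
    (fun z hz => hB.1.2.1 z hz.1) fun x y ⟨z, hz, hxy⟩ => ?_
  by_cases hz0 : z = 0
  · subst hz0
    obtain rfl : y = x := natToInt_injective (by simpa using hxy)
    exact .refl
  · exact .single ⟨z, ⟨hz, hz0⟩, hxy⟩

theorem IsMinimalMarkovBasis.neg_notMem (hB : IsMinimalMarkovBasis A B) (hz : z ∈ B) :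
    -z ∉ B := by
  intro hnz
  have hne : -z ≠ z := neg_ne_self.mpr fun h => hB.zero_notMem (h ▸ hz)
  refine hB.2 _ (Set.sdiff_singleton_ssubset.mpr hz) <| hB.1.of_forall_mem_or_neg_mem
    hB.1.1.sdiff (fun z hz => hB.1.2.1 z hz.1) fun y hy => ?_
  by_cases hyz : y = z
  · exact .inr ⟨hyz ▸ hnz, hyz ▸ hne⟩
  · exact .inl ⟨hy, hyz⟩

end General

theorem EqUpToSign.symm {ι : Type*} {B₁ B₂ : Set (ι → ℤ)} (h : EqUpToSign B₁ B₂) :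
    EqUpToSign B₂ B₁ :=
  ⟨h.2, h.1⟩

theorem EqUpToSign.trans {ι : Type*} {B₁ B₂ B₃ : Set (ι → ℤ)} (h₁₂ : EqUpToSign B₁ B₂)
    (h₂₃ : EqUpToSign B₂ B₃) : EqUpToSign B₁ B₃ := by
  have key : ∀ {X Y Z : Set (ι → ℤ)}, (∀ z ∈ X, z ∈ Y ∨ -z ∈ Y) →
      (∀ z ∈ Y, z ∈ Z ∨ -z ∈ Z) → ∀ z ∈ X, z ∈ Z ∨ -z ∈ Z := fun hXY hYZ z hz => by
    rcases hXY z hz with h | h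
    · exact hYZ z h
    · simpa [or_comm] using hYZ _ h
  exact ⟨key h₁₂.1 h₂₃.1, key h₂₃.2 h₁₂.2⟩

section Indispensable

variable {p d : ℕ} {A : Matrix (Fin d) (Fin p) ℤ} {B : Set (Fin p → ℤ)} {z : Fin p → ℤ}

theorem IsIndispensableMove.neg (hz : IsIndispensableMove A z) : IsIndispensableMove A (-z) := by
  obtain ⟨hmove : IsMove A z, hz0, hfib⟩ := hz
  refine ⟨hmove.neg, neg_ne_zero.mpr hz0, ?_⟩
  rw [posOf_neg, negOf_neg, IsMove.mulVec_negOf hmove, hfib, Set.pair_comm]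

/-- A path in `B` from `z⁺` to `z⁻` must leave `z⁺` by a step inside the fiber `{z⁺, z⁻}`,
and that step is `±z`. -/
theorem IsIndispensableMove.mem_or_neg_mem (hz : IsIndispensableMove A z)
    (hB : IsMarkovBasis A B) : z ∈ B ∨ -z ∈ B := by
  obtain ⟨hmove : IsMove A z, hz0, hfib⟩ := hz
  have hne : negOf z ≠ posOf z := fun h => hz0 (by
    rw [← natToInt_posOf_sub_negOf z, h, sub_self])
  obtain ⟨a, c, hza, rfl, hc, hac⟩ :=
    (hB.2.2 _ (posOf z) rfl (negOf z) (IsMove.mulVec_negOf hmove)).exists_exit_step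
      (P := (· = posOf z)) rfl hne
  have hc_mem := Accessible.mem_fiberOf hB.2.1 (rfl : posOf z ∈ fiberOf A _) (hza.tail hac)
  rw [hfib] at hc_mem
  obtain rfl : c = negOf z := hc_mem.resolve_left hc
  obtain ⟨w, hw, hstep | hstep⟩ := hac
  · right
    convert hw using 1
    rw [← natToInt_posOf_sub_negOf z, hstep]
    abel
  · left
    convert hw using 1
    rw [← natToInt_posOf_sub_negOf z, hstep]
    abel

theorem IsMarkovBasis.indispensable_finite (hB : IsMarkovBasis A B) :
    {z | IsIndispensableMove A z}.Finite :=
  (hB.1.union hB.1.neg).subset fun z hz => by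
    simpa using hz.mem_or_neg_mem hB

theorem IsMarkovBasis.subset_indispensable (hD : IsMarkovBasis A {z | IsIndispensableMove A z})
    (hB : IsMinimalMarkovBasis A B) : B ⊆ {z | IsIndispensableMove A z} := by
  have hBD : IsMarkovBasis A (B ∩ {z | IsIndispensableMove A z}) :=
    hD.of_forall_mem_or_neg_mem (hB.1.1.subset Set.inter_subset_left)
      (fun z hz => hB.1.2.1 z hz.1) fun z hz =>
        (hz.mem_or_neg_mem hB.1).imp (fun h => ⟨h, hz⟩) fun h => ⟨h, hz.neg⟩
  by_contra h
  exact hB.2 _ (Set.inter_subset_left.ssubset_of_ne (mt Set.inter_eq_left.mp h)) hBD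

theorem IsMinimalMarkovBasis.eqUpToSign_indispensable (hB : IsMinimalMarkovBasis A B)
    (hD : IsMarkovBasis A {z | IsIndispensableMove A z}) :
    EqUpToSign B {z | IsIndispensableMove A z} :=
  ⟨fun _ hz => .inl (hD.subset_indispensable hB hz), fun _ hz => hz.mem_or_neg_mem hB.1⟩

theorem IsMinimalMarkovBasis.subset_indispensable_of_unique (hA : IsHomogeneousMatrix A)
    (hB : IsMinimalMarkovBasis A B)
    (huniq : ∀ B' : Set (Fin p → ℤ), IsMinimalMarkovBasis A B' → EqUpToSign B B') :
    B ⊆ {z | IsIndispensableMove A z} := by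
  intro b hb
  have hmove : IsMove A b := hB.1.2.1 b hb
  have hb0 : b ≠ 0 := fun h => hB.zero_notMem (h ▸ hb)
  refine ⟨hmove, hb0, ?_⟩
  by_contra hfib
  have hpair : {posOf b, negOf b} ⊆ fiberOf A (A.mulVec (natToInt (posOf b))) :=
    Set.pair_subset rfl (IsMove.mulVec_negOf hmove)
  obtain ⟨x₀, hx₀, hx₀'⟩ := Set.exists_of_ssubset (hpair.ssubset_of_ne (Ne.symm hfib))
  obtain ⟨B', hB'sub, hB'⟩ := (hB.1.swap hmove hx₀).exists_minimal_subset
  have hdetour := notMem_detourMoves hA hmove hb0 hx₀'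
  rcases (huniq B' hB').1 b hb with h | h <;> rcases hB'sub h with h' | h'
  · exact h'.2 rfl
  · exact hdetour.1 h'
  · exact hB.neg_notMem hb h'.1
  · exact hdetour.2 h'

end Indispensable

theorem unique_minimal_MarkovBasis_iff_indispensable_general
    {p d : ℕ}
    (A : Matrix (Fin d) (Fin p) ℤ) (hA : IsHomogeneousMatrix A) :
    ((∃ B : Set (Fin p → ℤ), IsMinimalMarkovBasis A B ∧
        ∀ B' : Set (Fin p → ℤ), IsMinimalMarkovBasis A B' → EqUpToSign B B') ↔
      IsMarkovBasis A {z | IsIndispensableMove A z}) ∧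
    (IsMarkovBasis A {z | IsIndispensableMove A z} →
      ∀ B : Set (Fin p → ℤ), IsMinimalMarkovBasis A B →
        EqUpToSign B {z | IsIndispensableMove A z}) := by
  refine ⟨⟨fun ⟨B, hB, huniq⟩ => ?_, fun hD => ?_⟩,
    fun hD B hB => hB.eqUpToSign_indispensable hD⟩
  · exact hB.1.of_forall_mem_or_neg_mem hB.1.indispensable_finite (fun z hz => hz.1)
      fun z hz => .inl (hB.subset_indispensable_of_unique hA huniq hz)
  · obtain ⟨B, -, hB⟩ := hD.exists_minimal_subset
    exact ⟨B, hB, fun B' hB' =>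
      (hB.eqUpToSign_indispensable hD).trans (hB'.eqUpToSign_indispensable hD).symm⟩

/-- there is a unique (up to sign) minimal Markov basis iff the set of
indispensable moves is a Markov basis; and then every minimal Markov basis consists,
up to sign, exactly of the indispensable moves. -/
theorem unique_minimal_MarkovBasis_iff_indispensable
    {p d : ℕ} (hp : 0 < p) (hd : 0 < d)
    (A : Matrix (Fin d) (Fin p) ℤ) (hA : IsHomogeneousMatrix A) :
    ((∃ B : Set (Fin p → ℤ), IsMinimalMarkovBasis A B ∧
        ∀ B' : Set (Fin p → ℤ), IsMinimalMarkovBasis A B' → EqUpToSign B B') ↔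
      IsMarkovBasis A {z | IsIndispensableMove A z}) ∧
    (IsMarkovBasis A {z | IsIndispensableMove A z} →
      ∀ B : Set (Fin p → ℤ), IsMinimalMarkovBasis A B →
        EqUpToSign B {z | IsIndispensableMove A z}) :=
  unique_minimal_MarkovBasis_iff_indispensable_general A hA
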